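/- Decisiveness dichotomy for complementary coalitions: for a social welfare function satisfying Pareto and IIA on at least 3 alternatives, for any coalition D ⊆ N and distinct alternatives a, b, c, if there is a profile where all of D prefer a to c and the social outcome is a ≻ c in the configuration of the group-contraction argument, then either D is decisive or its complement within the ambient decisive set is decisive; formally: if D = D' ∪ D'' is a partition of a decisive set D, then D' is decisive or D'' is decisive. -/

import Mathlib

/-- A strict linear order (complete, transitive, irreflexive preference) on `X`. -/
def SLO (X : Type*) : Type _ := {r : X → X → Prop // IsStrictTotalOrder X r}

/-- Pareto: unanimous strict preference is replicated socially. -/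
def Pareto {X ι : Type*} (f : (ι → SLO X) → SLO X) : Prop :=
  ∀ P : ι → SLO X, ∀ a b : X, (∀ i, (P i).1 a b) → (f P).1 a b

/-- Independence of irrelevant alternatives. -/
def IIA {X ι : Type*} (f : (ι → SLO X) → SLO X) : Prop :=
  ∀ P P' : ι → SLO X, ∀ a b : X,
    (∀ i, (P i).1 a b ↔ (P' i).1 a b) → ((f P).1 a b ↔ (f P').1 a b)

/-- A coalition `D` is `(a,b)`-decisive. -/
def PairDecisive {X ι : Type*} (f : (ι → SLO X) → SLO X) (D : Set ι) (a b : X) : Prop :=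
  ∀ P : ι → SLO X, (∀ i ∈ D, (P i).1 a b) → (f P).1 a b

/-- A coalition is decisive if it is `(a,b)`-decisive for all distinct `a, b`. -/
def Decisive {X ι : Type*} (f : (ι → SLO X) → SLO X) (D : Set ι) : Prop :=
  ∀ a b : X, a ≠ b → PairDecisive f D a b

/-- `d` is a dictator for `f`. -/
def IsDictator {X ι : Type*} (f : (ι → SLO X) → SLO X) (d : ι) : Prop :=
  ∀ P : ι → SLO X, ∀ a b : X, (P d).1 a b → (f P).1 a b

/-!
Take distinct alternatives `a, b, c` and the profile in which `D'` ranks `a ≻ b ≻ c`, `D''`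
ranks `b ≻ c ≻ a` and everyone else `c ≻ a ≻ b`. All of `D` prefers `b` to `c`, so society does.
If society ranks `a ≻ c`, then `D'` wins `a` over `c` against the opposition of everyone else;
otherwise society ranks `b ≻ c ≻ a`, and `D''` wins `b` over `a` against everyone else. Winning a
single pair against unanimous opposition (almost decisiveness) spreads, by Pareto and IIA, to
every pair of alternatives.
-/

namespace SLO
variable {X : Type*}

theorem asymm (p : SLO X) {a b : X} (h : p.1 a b) : ¬ p.1 b a :=
  fun h' => p.2.irrefl a (p.2.trans a b a h h')

theorem trans (p : SLO X) {a b c : X} (hab : p.1 a b) (hbc : p.1 b c) : p.1 a c :=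
  p.2.trans a b c hab hbc

theorem rel_or_rel_of_ne (p : SLO X) {a b : X} (h : a ≠ b) : p.1 a b ∨ p.1 b a :=
  have := p.2; (trichotomous_of p.1 a b).imp_right (·.resolve_left h)

def dual (p : SLO X) : SLO X := ⟨Function.swap p.1, have := p.2; inferInstance⟩

theorem isStrictTotalOrder_raise (y : X) (p : SLO X) :
    IsStrictTotalOrder X (fun a b => b ≠ y ∧ (a = y ∨ p.1 a b)) := by
  have := p.2
  refine { trichotomous := fun a b hab hba => ?_, irrefl := fun a => ?_, trans := fun a b c => ?_ }
  · have := trichotomous_of p.1 a b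
    grind
  · have := irrefl_of p.1 a
    grind
  · have := trans_of p.1 (a := a) (b := b) (c := c)
    grind

def raise (y : X) (p : SLO X) : SLO X :=
  ⟨fun a b => b ≠ y ∧ (a = y ∨ p.1 a b), isStrictTotalOrder_raise y p⟩

def lower (x : X) (p : SLO X) : SLO X := (p.dual.raise x).dual

@[simp] theorem raise_apply {y : X} {p : SLO X} {a b : X} :
    (p.raise y).1 a b ↔ b ≠ y ∧ (a = y ∨ p.1 a b) := Iff.rfl

@[simp] theorem lower_apply {x : X} {p : SLO X} {a b : X} :
    (p.lower x).1 a b ↔ a ≠ x ∧ (b = x ∨ p.1 a b) := Iff.rfl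

theorem exists_rel_rel {a b c : X} (hab : a ≠ b) (hbc : b ≠ c) (hac : a ≠ c) :
    ∃ p : SLO X, p.1 a b ∧ p.1 b c ∧ p.1 a c := by
  let p : SLO X := raise a (raise b ⟨WellOrderingRel, inferInstance⟩)
  exact ⟨p, ⟨hab.symm, .inl rfl⟩, ⟨hac.symm, .inr ⟨hbc.symm, .inl rfl⟩⟩, ⟨hac.symm, .inl rfl⟩⟩

end SLO

section AlmostDecisive

variable {X ι : Type*} {f : (ι → SLO X) → SLO X} {G : Set ι} {x y z : X}

def AlmostDecisive (f : (ι → SLO X) → SLO X) (G : Set ι) (x y : X) : Prop :=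
  ∀ P : ι → SLO X, (∀ i ∈ G, (P i).1 x y) → (∀ i ∉ G, (P i).1 y x) → (f P).1 x y

theorem PairDecisive.almostDecisive (h : PairDecisive f G x y) : AlmostDecisive f G x y :=
  fun P hG _ => h P hG

theorem almostDecisive_of_profile (hI : IIA f) (P : ι → SLO X)
    (hG : ∀ i ∈ G, (P i).1 x y) (hGc : ∀ i ∉ G, (P i).1 y x) (hP : (f P).1 x y) :
    AlmostDecisive f G x y := by
  intro Q hQG hQGc
  refine (hI P Q x y fun i => ?_).mp hP
  by_cases hi : i ∈ G
  · exact iff_of_true (hG i hi) (hQG i hi)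
  · exact iff_of_false ((P i).asymm (hGc i hi)) ((Q i).asymm (hQGc i hi))

open Classical in
theorem AlmostDecisive.pairDecisive_left (hP : Pareto f) (hI : IIA f)
    (h : AlmostDecisive f G x y) (hxy : x ≠ y) (hzx : z ≠ x) (hzy : z ≠ y) :
    PairDecisive f G x z := by
  intro Q hQ
  let P : ι → SLO X := fun i => if i ∈ G then ((Q i).raise y).raise x else (Q i).raise y
  have hPxy : (f P).1 x y := h P (fun i hi => by simp [P, hi, hxy.symm])
    (fun i hi => by simp [P, hi, hxy])
  have hPyz : (f P).1 y z := hP P y z fun i => by by_cases hi : i ∈ G <;> simp [P, hi, hzx, hzy]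
  refine (hI P Q x z fun i => ?_).mp ((f P).trans hPxy hPyz)
  by_cases hi : i ∈ G
  · simp [P, hi, hzx, hQ i hi]
  · simp [P, hi, hzy, hxy]

open Classical in
theorem AlmostDecisive.pairDecisive_right (hP : Pareto f) (hI : IIA f)
    (h : AlmostDecisive f G x y) (hxy : x ≠ y) (hzx : z ≠ x) (hzy : z ≠ y) :
    PairDecisive f G z y := by
  intro Q hQ
  let P : ι → SLO X := fun i => if i ∈ G then ((Q i).raise x).raise z else (Q i).lower x
  have hPzx : (f P).1 z x := hP P z x fun i => by
    by_cases hi : i ∈ G <;> simp [P, hi, hzx, hzx.symm]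
  have hPxy : (f P).1 x y := h P (fun i hi => by simp [P, hi, hxy.symm, hzy.symm])
    (fun i hi => by simp [P, hi, hxy.symm])
  refine (hI P Q z y fun i => ?_).mp ((f P).trans hPzx hPxy)
  by_cases hi : i ∈ G
  · simp [P, hi, hzy.symm, hQ i hi]
  · simp [P, hi, hzx, hxy.symm]

theorem AlmostDecisive.of_left (hP : Pareto f) (hI : IIA f) (h : AlmostDecisive f G x y)
    (hxy : x ≠ y) {w : X} (hwx : w ≠ x) : AlmostDecisive f G x w := by
  rcases eq_or_ne w y with rfl | hwy
  · exact h
  · exact (h.pairDecisive_left hP hI hxy hwx hwy).almostDecisive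

theorem AlmostDecisive.of_right (hP : Pareto f) (hI : IIA f) (h : AlmostDecisive f G x y)
    (hxy : x ≠ y) {w : X} (hwy : w ≠ y) : AlmostDecisive f G w y := by
  rcases eq_or_ne w x with rfl | hwx
  · exact h
  · exact (h.pairDecisive_right hP hI hxy hwx hwy).almostDecisive

theorem AlmostDecisive.decisive (hthird : ∀ u v : X, ∃ w, w ≠ u ∧ w ≠ v) (hP : Pareto f)
    (hI : IIA f) (h : AlmostDecisive f G x y) (hxy : x ≠ y) : Decisive f G := by
  have hall : ∀ u v, u ≠ v → AlmostDecisive f G u v := by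
    intro u v huv
    obtain ⟨w, hwu, hwx⟩ := hthird u x
    have hxw := h.of_left hP hI hxy hwx
    exact (hxw.of_right hP hI hwx.symm hwu.symm).of_left hP hI hwu.symm huv.symm
  intro u v huv
  obtain ⟨w, hwu, hwv⟩ := hthird u v
  exact (hall u w hwu.symm).pairDecisive_left hP hI hwu.symm huv.symm hwv.symm

end AlmostDecisive

theorem exists_ne_ne_of_three_le_card {X : Type*} [Fintype X] (hX : 3 ≤ Fintype.card X)
    (u v : X) : ∃ w, w ≠ u ∧ w ≠ v := by
  classical
  have hcard : ({u, v} : Finset X).card < (Finset.univ : Finset X).card :=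
    (Finset.card_le_two).trans_lt (by rwa [Finset.card_univ])
  obtain ⟨w, -, hw⟩ := Finset.exists_mem_notMem_of_card_lt_card hcard
  simp only [Finset.mem_insert, Finset.mem_singleton, not_or] at hw
  exact ⟨w, hw⟩

theorem decisiveness_dichotomy_general {X ι : Type*} [Fintype X]
    (hX : 3 ≤ Fintype.card X)
    (f : (ι → SLO X) → SLO X) (hP : Pareto f) (hI : IIA f)
    (D D' D'' : Set ι) (hunion : D' ∪ D'' = D) (hdisj : Disjoint D' D'')
    (hD : Decisive f D) :
    Decisive f D' ∨ Decisive f D'' := by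
  classical
  have hthird := exists_ne_ne_of_three_le_card hX
  obtain ⟨a, b, c, hab, hac, hbc⟩ := Fintype.two_lt_card_iff.mp hX
  obtain ⟨o₁, o₁ab, o₁bc, o₁ac⟩ := SLO.exists_rel_rel hab hbc hac
  obtain ⟨o₂, o₂bc, o₂ca, o₂ba⟩ := SLO.exists_rel_rel hbc hac.symm hab.symm
  obtain ⟨o₃, o₃ca, o₃ab, -⟩ := SLO.exists_rel_rel hac.symm hab hbc.symm
  let P : ι → SLO X := fun i => if i ∈ D' then o₁ else if i ∈ D'' then o₂ else o₃
  have hPbc : (f P).1 b c := hD b c hbc P fun i hi => by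
    rcases hunion ▸ hi with hi | hi
    · simp [P, hi, o₁bc]
    · simp [P, hi, hdisj.notMem_of_mem_right hi, o₂bc]
  rcases (f P).rel_or_rel_of_ne hac with hPac | hPca
  · refine .inl ((almostDecisive_of_profile hI P ?_ ?_ hPac).decisive hthird hP hI hac)
    · intro i hi; simp [P, hi, o₁ac]
    · intro i hi; by_cases hi' : i ∈ D'' <;> simp [P, hi, hi', o₂ca, o₃ca]
  · have hPba := (f P).trans hPbc hPca
    refine .inr ((almostDecisive_of_profile hI P ?_ ?_ hPba).decisive hthird hP hI hab.symm)
    · intro i hi; simp [P, hi, hdisj.notMem_of_mem_right hi, o₂ba]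
    · intro i hi; by_cases hi' : i ∈ D' <;> simp [P, hi, hi', o₁ab, o₃ab]

theorem decisiveness_dichotomy {X ι : Type*} [Fintype X] [Finite ι]
    (hX : 3 ≤ Fintype.card X)
    (f : (ι → SLO X) → SLO X) (hP : Pareto f) (hI : IIA f)
    (D D' D'' : Set ι) (hunion : D' ∪ D'' = D) (hdisj : Disjoint D' D'')
    (h1 : D'.Nonempty) (h2 : D''.Nonempty) (hD : Decisive f D) :
    Decisive f D' ∨ Decisive f D'' :=
  decisiveness_dichotomy_general hX f hP hI D D' D'' hunion hdisj hD
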